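/- Let Q > 0 and 1 ≤ p ≤ ∞. If f_n ∈ C_{Q,p} for all n ≥ 1 and f_n(x) → f(x) as n → ∞ for every x ∈ Ω, for some function f : Ω → ℝ, then f belongs to the Barron space B and ‖f‖_B ≤ Q. -/

import Mathlib

open MeasureTheory ENNReal

noncomputable section

abbrev Vec (N : ℕ) := Fin N → ℝ

abbrev Param (N : ℕ) := Vec N × Vec N × Vec N

/-- componentwise ReLU -/
def relu {N : ℕ} (x : Vec N) : Vec N := fun i => max (x i) 0

/-- graph convolution defined via the orthogonal matrix `U` -/
def conv {N : ℕ} (U : Matrix (Fin N) (Fin N) ℝ) (b x : Vec N) : Vec N :=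
  U.mulVec (U.transpose.mulVec b * U.transpose.mulVec x)

/-- The data and standing assumptions of the graph Barron space setting. -/
structure Setting (N : ℕ) where
  U : Matrix (Fin N) (Fin N) ℝ
  W : Submodule ℝ (Vec N)
  dom : Set (Vec N)
  nrm : Vec N → ℝ
  conorm : Vec N → ℝ
  hN : 1 ≤ N
  hU : U.transpose * U = 1
  hdomc : IsCompact dom
  hdomne : dom.Nonempty
  nrm_add : ∀ x y, nrm (x + y) ≤ nrm x + nrm y
  nrm_smul : ∀ (t : ℝ) (x), nrm (t • x) = |t| * nrm x
  nrm_eq_zero : ∀ x, nrm x = 0 ↔ x = 0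
  relu_nrm_le : ∀ x, nrm (relu x) ≤ nrm x
  conorm_add : ∀ b b', b ∈ W → b' ∈ W → conorm (b + b') ≤ conorm b + conorm b'
  conorm_smul : ∀ (t : ℝ) (b), b ∈ W → conorm (t • b) = |t| * conorm b
  conorm_eq_zero : ∀ b, b ∈ W → (conorm b = 0 ↔ b = 0)
  conv_nrm_le : ∀ b ∈ W, ∀ x ∈ dom, nrm (conv U b x) ≤ conorm b

namespace Setting

variable {N : ℕ} (S : Setting N)

/-- dual norm `‖a‖_* = sup {aᵀx : ‖x‖ ≤ 1}` -/
def dual (a : Vec N) : ℝ :=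
  sSup {t : ℝ | ∃ x : Vec N, S.nrm x ≤ 1 ∧ t = ∑ i, a i * x i}

/-- the neuron `aᵀ σ(b*x + c)` -/
def neuron (x : Vec N) (p : Param N) : ℝ :=
  ∑ i, p.1 i * relu (conv S.U p.2.1 x + p.2.2) i

/-- `P_f`: probability measures on `ℝ^N × W × ℝ^N` representing `f` on `Ω`. -/
def reps (f : Vec N → ℝ) : Set (Measure (Param N)) :=
  {ρ | IsProbabilityMeasure ρ ∧ ρ {p : Param N | p.2.1 ∉ S.W} = 0 ∧
    ∀ x ∈ S.dom, Integrable (S.neuron x) ρ ∧ f x = ∫ p, S.neuron x p ∂ρ}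

/-- the weight `‖a‖_* (‖b‖_co + ‖c‖)` -/
def weight (p : Param N) : ℝ := S.dual p.1 * (S.conorm p.2.1 + S.nrm p.2.2)

def cost (ρ : Measure (Param N)) : ℝ≥0∞ :=
  ∫⁻ p, ENNReal.ofReal (S.weight p) ∂ρ

/-- the Barron norm `‖f‖_{B_1} ∈ [0,∞]` -/
def barron (f : Vec N → ℝ) : ℝ≥0∞ :=
  ⨅ ρ ∈ S.reps f, S.cost ρ

/-- membership in the Barron space `B = B_1` -/
def memB (f : Vec N → ℝ) : Prop :=
  (S.reps f).Nonempty ∧ S.barron f < ⊤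

/-- `(a,b,c)` lies in `S × T` -/
def onST (p : Param N) : Prop :=
  S.dual p.1 = 1 ∧ p.2.1 ∈ S.W ∧ S.conorm p.2.1 + S.nrm p.2.2 = 1

/-- output of the shallow GCNN with parameters `θ` -/
def netOut {M : ℕ} (θ : Fin M → Param N) (x : Vec N) : ℝ :=
  (M : ℝ)⁻¹ * ∑ m, S.neuron x (θ m)

/-- the `p`-path norm, `1 ≤ p ≤ ∞` -/
def pathNorm {M : ℕ} (p : ℝ≥0∞) (θ : Fin M → Param N) : ℝ :=
  if p = ⊤ then ⨆ m, S.weight (θ m)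
  else ((M : ℝ)⁻¹ * ∑ m, S.weight (θ m) ^ p.toReal) ^ (p.toReal)⁻¹

/-- the class `C_{Q,p}` of GCNN outputs with `p`-path norm at most `Q` -/
def CQp (Q : ℝ) (p : ℝ≥0∞) : Set (Vec N → ℝ) :=
  {g | ∃ M : ℕ, 1 ≤ M ∧ ∃ θ : Fin M → Param N,
    (∀ m, (θ m).2.1 ∈ S.W) ∧ S.pathNorm p θ ≤ Q ∧ ∀ x ∈ S.dom, g x = S.netOut θ x}

end Setting

set_option linter.unusedSectionVars false
set_option linter.unusedVariables false

section NormLike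

variable {E : Type*} [NormedAddCommGroup E] [NormedSpace ℝ E] [FiniteDimensional ℝ E]

variable (n : E → ℝ)

theorem normlike_zero (h_smul : ∀ (t : ℝ) x, n (t • x) = |t| * n x) : n 0 = 0 := by
  have := h_smul 0 0
  simpa using this

theorem normlike_neg (h_smul : ∀ (t : ℝ) x, n (t • x) = |t| * n x) (x : E) : n (-x) = n x := by
  have := h_smul (-1) x
  simpa using this

theorem normlike_nonneg (h_add : ∀ x y, n (x + y) ≤ n x + n y)
    (h_smul : ∀ (t : ℝ) x, n (t • x) = |t| * n x) (x : E) : 0 ≤ n x := by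
  have h1 := h_add x (-x)
  rw [add_neg_cancel, normlike_zero n h_smul, normlike_neg n h_smul] at h1
  linarith

theorem normlike_sum (h_add : ∀ x y, n (x + y) ≤ n x + n y)
    (h_smul : ∀ (t : ℝ) x, n (t • x) = |t| * n x)
    {ι : Type*} (s : Finset ι) (f : ι → E) :
    n (∑ i ∈ s, f i) ≤ ∑ i ∈ s, n (f i) := by
  classical
  induction s using Finset.cons_induction with
  | empty => simp [normlike_zero n h_smul]
  | cons a s ha ih =>
    rw [Finset.sum_cons, Finset.sum_cons]
    exact le_trans (h_add _ _) (by linarith)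

theorem normlike_upper (h_add : ∀ x y, n (x + y) ≤ n x + n y)
    (h_smul : ∀ (t : ℝ) x, n (t • x) = |t| * n x) :
    ∃ C : ℝ, 0 ≤ C ∧ ∀ x, n x ≤ C * ‖x‖ := by
  classical
  set B := Module.finBasis ℝ E
  set cf : Fin (Module.finrank ℝ E) → E →L[ℝ] ℝ :=
    fun i => LinearMap.toContinuousLinearMap (B.coord i) with hcf
  refine ⟨∑ i, ‖cf i‖ * n (B i), Finset.sum_nonneg fun i _ =>
    mul_nonneg (norm_nonneg _) (normlike_nonneg n h_add h_smul _), fun x => ?_⟩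
  have hx : x = ∑ i, B.repr x i • B i := (B.sum_repr x).symm
  calc n x = n (∑ i, B.repr x i • B i) := by rw [← hx]
    _ ≤ ∑ i, n (B.repr x i • B i) := normlike_sum n h_add h_smul _ _
    _ ≤ ∑ i, (‖cf i‖ * ‖x‖) * n (B i) := by
        refine Finset.sum_le_sum fun i _ => ?_
        rw [h_smul]
        refine mul_le_mul_of_nonneg_right ?_ (normlike_nonneg n h_add h_smul _)
        have := (cf i).le_opNorm x
        have hco : cf i x = B.repr x i := by simp [hcf, Module.Basis.coord_apply]
        rw [hco] at this
        simpa [Real.norm_eq_abs] using this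
    _ = (∑ i, ‖cf i‖ * n (B i)) * ‖x‖ := by rw [Finset.sum_mul]; congr 1; ext i; ring

theorem normlike_lip (h_add : ∀ x y, n (x + y) ≤ n x + n y)
    (h_smul : ∀ (t : ℝ) x, n (t • x) = |t| * n x)
    {C : ℝ} (hC : ∀ x, n x ≤ C * ‖x‖) (x y : E) : |n x - n y| ≤ C * ‖x - y‖ := by
  rw [abs_sub_le_iff]
  constructor
  · have h1 : n x ≤ n (x - y) + n y := by
      have := h_add (x - y) y
      simpa using this
    have := hC (x - y)
    linarith
  · have h1 : n y ≤ n (y - x) + n x := by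
      have := h_add (y - x) x
      simpa using this
    have h2 := hC (y - x)
    rw [← norm_neg (y - x)] at h2
    simp only [neg_sub] at h2
    linarith

theorem normlike_continuous (h_add : ∀ x y, n (x + y) ≤ n x + n y)
    (h_smul : ∀ (t : ℝ) x, n (t • x) = |t| * n x) : Continuous n := by
  obtain ⟨C, hC0, hC⟩ := normlike_upper n h_add h_smul
  have : LipschitzWith (Real.toNNReal C) n := by
    refine LipschitzWith.of_dist_le_mul fun x y => ?_
    rw [Real.dist_eq, Real.coe_toNNReal C hC0, dist_eq_norm]
    exact normlike_lip n h_add h_smul hC x y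
  exact this.continuous

theorem normlike_lower (h_add : ∀ x y, n (x + y) ≤ n x + n y)
    (h_smul : ∀ (t : ℝ) x, n (t • x) = |t| * n x)
    (hnz : ∀ x, x ≠ 0 → n x ≠ 0) :
    ∃ c : ℝ, 0 < c ∧ ∀ x, c * ‖x‖ ≤ n x := by
  by_cases hE : ∀ x : E, x = 0
  · exact ⟨1, one_pos, fun x => by rw [hE x]; simp [normlike_zero n h_smul]⟩
  · push_neg at hE
    obtain ⟨x₀, hx₀⟩ := hE
    have hsph : (Metric.sphere (0 : E) 1).Nonempty := by
      refine ⟨‖x₀‖⁻¹ • x₀, ?_⟩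
      simp [norm_smul, abs_of_nonneg, inv_mul_cancel₀ (norm_ne_zero_iff.mpr hx₀)]
    obtain ⟨z₀, hz₀mem, hz₀min⟩ := (isCompact_sphere (0 : E) 1).exists_isMinOn hsph
      ((normlike_continuous n h_add h_smul).continuousOn)
    have hz₀norm : ‖z₀‖ = 1 := by simpa using hz₀mem
    have hz₀ne : z₀ ≠ 0 := by
      intro h; rw [h] at hz₀norm; simp at hz₀norm
    refine ⟨n z₀, lt_of_le_of_ne (normlike_nonneg n h_add h_smul z₀)
      (Ne.symm (hnz z₀ hz₀ne)), fun x => ?_⟩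
    by_cases hx : x = 0
    · simp [hx, normlike_zero n h_smul]
    · have hu : ‖x‖⁻¹ • x ∈ Metric.sphere (0 : E) 1 := by
        simp [norm_smul, abs_of_nonneg, inv_mul_cancel₀ (norm_ne_zero_iff.mpr hx)]
      have hmin := hz₀min hu
      have hrw : n x = ‖x‖ * n (‖x‖⁻¹ • x) := by
        have := h_smul ‖x‖ (‖x‖⁻¹ • x)
        rw [smul_smul, mul_inv_cancel₀ (norm_ne_zero_iff.mpr hx), one_smul] at this
        rw [this, abs_of_nonneg (norm_nonneg x)]
      rw [hrw]
      rw [mul_comm (n z₀)]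
      exact mul_le_mul_of_nonneg_left hmin (norm_nonneg x)

end NormLike
namespace Setting

variable {N : ℕ} (S : Setting N)

theorem nrm_nonneg (x : Vec N) : 0 ≤ S.nrm x :=
  normlike_nonneg S.nrm S.nrm_add S.nrm_smul x

theorem nrm_zero : S.nrm 0 = 0 := normlike_zero S.nrm S.nrm_smul

theorem nrm_continuous : Continuous S.nrm :=
  normlike_continuous S.nrm S.nrm_add S.nrm_smul

theorem nrm_upper : ∃ C : ℝ, 0 < C ∧ ∀ x, S.nrm x ≤ C * ‖x‖ := by
  obtain ⟨C, hC0, hC⟩ := normlike_upper S.nrm S.nrm_add S.nrm_smul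
  exact ⟨C + 1, by linarith, fun x => le_trans (hC x)
    (mul_le_mul_of_nonneg_right (by linarith) (norm_nonneg x))⟩

theorem nrm_lower : ∃ c : ℝ, 0 < c ∧ ∀ x, c * ‖x‖ ≤ S.nrm x :=
  normlike_lower S.nrm S.nrm_add S.nrm_smul
    (fun x hx => fun h => hx ((S.nrm_eq_zero x).mp h))

/-- conorm as a function on the subtype `↥W` -/
def conormW : ↥S.W → ℝ := fun b => S.conorm ↑b

theorem conormW_add (x y : ↥S.W) : S.conormW (x + y) ≤ S.conormW x + S.conormW y := by
  simpa [conormW] using S.conorm_add x y x.2 y.2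

theorem conormW_smul (t : ℝ) (x : ↥S.W) : S.conormW (t • x) = |t| * S.conormW x := by
  simpa [conormW] using S.conorm_smul t x x.2

theorem conorm_nonneg {b : Vec N} (hb : b ∈ S.W) : 0 ≤ S.conorm b :=
  normlike_nonneg S.conormW S.conormW_add S.conormW_smul ⟨b, hb⟩

theorem conorm_zero : S.conorm 0 = 0 := normlike_zero S.conormW S.conormW_smul

theorem conormW_continuous : Continuous S.conormW :=
  normlike_continuous S.conormW S.conormW_add S.conormW_smul

theorem conorm_lower : ∃ c : ℝ, 0 < c ∧ ∀ b ∈ S.W, c * ‖b‖ ≤ S.conorm b := by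
  obtain ⟨c, hc0, hc⟩ := normlike_lower S.conormW S.conormW_add S.conormW_smul
    (fun x hx h => hx (by
      have := (S.conorm_eq_zero x x.2).mp h
      exact Subtype.coe_injective (by simpa [conormW] using this)))
  refine ⟨c, hc0, fun b hb => ?_⟩
  have := hc ⟨b, hb⟩
  simpa [conormW] using this

/-- The defining set for the dual norm. -/
def dualSet (a : Vec N) : Set ℝ :=
  {t : ℝ | ∃ x : Vec N, S.nrm x ≤ 1 ∧ t = ∑ i, a i * x i}

theorem dualSet_nonempty (a : Vec N) : (S.dualSet a).Nonempty :=
  ⟨0, 0, by simp [S.nrm_zero]⟩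

theorem dualSet_bddAbove (a : Vec N) : BddAbove (S.dualSet a) := by
  obtain ⟨c, hc0, hc⟩ := S.nrm_lower
  refine ⟨(∑ i, |a i|) / c, fun t ht => ?_⟩
  obtain ⟨x, hx, rfl⟩ := ht
  have hxn : ‖x‖ ≤ 1 / c := by
    rw [le_div_iff₀ hc0, mul_comm]
    exact le_trans (hc x) hx
  calc ∑ i, a i * x i ≤ ∑ i, |a i| * (1 / c) := by
        refine Finset.sum_le_sum fun i _ => ?_
        calc a i * x i ≤ |a i * x i| := le_abs_self _
          _ = |a i| * |x i| := abs_mul _ _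
          _ ≤ |a i| * (1 / c) := by
              refine mul_le_mul_of_nonneg_left ?_ (abs_nonneg _)
              exact le_trans (norm_le_pi_norm x i) hxn
    _ = (∑ i, |a i|) / c := by rw [← Finset.sum_mul]; ring

theorem le_dual {a : Vec N} {x : Vec N} (hx : S.nrm x ≤ 1) :
    ∑ i, a i * x i ≤ S.dual a :=
  le_csSup (S.dualSet_bddAbove a) ⟨x, hx, rfl⟩

theorem dual_nonneg (a : Vec N) : 0 ≤ S.dual a := by
  have := S.le_dual (a := a) (x := 0) (by simp [S.nrm_zero])
  simpa using this

theorem dual_csSup_le {a : Vec N} {B : ℝ} (h : ∀ x, S.nrm x ≤ 1 → ∑ i, a i * x i ≤ B) :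
    S.dual a ≤ B := by
  refine csSup_le (S.dualSet_nonempty a) fun t ht => ?_
  obtain ⟨x, hx, rfl⟩ := ht
  exact h x hx

theorem dual_zero : S.dual 0 = 0 := by
  refine le_antisymm (S.dual_csSup_le fun x hx => by simp) (S.dual_nonneg 0)

theorem dual_upper : ∃ C : ℝ, 0 < C ∧ ∀ a, S.dual a ≤ C * ‖a‖ := by
  obtain ⟨c, hc0, hc⟩ := S.nrm_lower
  refine ⟨(N + 1) / c, by positivity, fun a => ?_⟩
  refine S.dual_csSup_le fun x hx => ?_
  have hxn : ‖x‖ ≤ 1 / c := by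
    rw [le_div_iff₀ hc0, mul_comm]
    exact le_trans (hc x) hx
  calc ∑ i, a i * x i ≤ ∑ i, ‖a‖ * (1 / c) := by
        refine Finset.sum_le_sum fun i _ => ?_
        calc a i * x i ≤ |a i * x i| := le_abs_self _
          _ = |a i| * |x i| := abs_mul _ _
          _ ≤ ‖a‖ * (1 / c) := by
              refine mul_le_mul (norm_le_pi_norm a i) (le_trans (norm_le_pi_norm x i) hxn)
                (abs_nonneg _) (norm_nonneg _)
    _ = N * ‖a‖ * (1 / c) := by simp [Finset.sum_const, Finset.card_univ]; ring
    _ ≤ (N + 1) / c * ‖a‖ := by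
        rw [div_mul_eq_mul_div, le_div_iff₀ hc0]
        have h1 : ↑N * ‖a‖ * (1 / c) * c = ↑N * ‖a‖ := by field_simp
        rw [h1]
        nlinarith [norm_nonneg a]

theorem dual_add_le (a a' : Vec N) : S.dual (a + a') ≤ S.dual a + S.dual a' := by
  refine S.dual_csSup_le fun x hx => ?_
  have h1 := S.le_dual (a := a) hx
  have h2 := S.le_dual (a := a') hx
  have : ∑ i, (a + a') i * x i = (∑ i, a i * x i) + ∑ i, a' i * x i := by
    rw [← Finset.sum_add_distrib]
    refine Finset.sum_congr rfl fun i _ => by simp [add_mul]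
  linarith [this.le, this.ge]

theorem dual_continuous : Continuous S.dual := by
  obtain ⟨C, hC0, hC⟩ := S.dual_upper
  have hlip : ∀ a a' : Vec N, S.dual a - S.dual a' ≤ C * ‖a - a'‖ := by
    intro a a'
    have h1 : S.dual a ≤ S.dual (a - a') + S.dual a' := by
      have := S.dual_add_le (a - a') a'
      simpa using this
    have := hC (a - a')
    linarith
  have : LipschitzWith (Real.toNNReal C) S.dual := by
    refine LipschitzWith.of_dist_le_mul fun x y => ?_
    rw [Real.dist_eq, Real.coe_toNNReal C hC0.le, dist_eq_norm, abs_sub_le_iff]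
    refine ⟨hlip x y, ?_⟩
    rw [← norm_neg (x - y)]
    simpa using hlip y x
  exact this.continuous

theorem dual_smul_le {t : ℝ} (ht : 0 ≤ t) (a : Vec N) : S.dual (t • a) ≤ t * S.dual a := by
  refine S.dual_csSup_le fun x hx => ?_
  have : ∑ i, (t • a) i * x i = t * ∑ i, a i * x i := by
    rw [Finset.mul_sum]
    refine Finset.sum_congr rfl fun i _ => by simp [Pi.smul_apply]; ring
  rw [this]
  exact mul_le_mul_of_nonneg_left (S.le_dual hx) ht

theorem norm_le_dual : ∃ C : ℝ, 0 < C ∧ ∀ a, ‖a‖ ≤ C * S.dual a := by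
  obtain ⟨Cn, hCn0, hCn⟩ := S.nrm_upper
  refine ⟨Cn, hCn0, fun a => ?_⟩
  by_cases ha : a = 0
  · simp [ha, S.dual_zero]
  · have hna : 0 < S.nrm a :=
      lt_of_le_of_ne (S.nrm_nonneg a) (Ne.symm fun h => ha ((S.nrm_eq_zero a).mp h))
    have hx : S.nrm ((S.nrm a)⁻¹ • a) ≤ 1 := by
      rw [S.nrm_smul, abs_of_nonneg (inv_nonneg.mpr hna.le), inv_mul_cancel₀ hna.ne']
    have hsum := S.le_dual (a := a) hx
    have hs : ∑ i, a i * ((S.nrm a)⁻¹ • a) i = (S.nrm a)⁻¹ * ∑ i, a i * a i := by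
      rw [Finset.mul_sum]
      refine Finset.sum_congr rfl fun i _ => by simp [Pi.smul_apply]; ring
    rw [hs] at hsum
    have hsq : ‖a‖ ^ 2 ≤ ∑ i, a i * a i := by
      have h1 : ‖a‖ ≤ Real.sqrt (∑ i, a i * a i) := by
        have hnn : (0:ℝ) ≤ Real.sqrt (∑ i, a i * a i) := Real.sqrt_nonneg _
        refine pi_norm_le_iff_of_nonneg hnn |>.mpr fun i => ?_
        rw [Real.norm_eq_abs, ← Real.sqrt_sq_eq_abs]
        refine Real.sqrt_le_sqrt ?_
        have : a i ^ 2 = a i * a i := sq (a i) ▸ by ring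
        rw [this]
        exact Finset.single_le_sum (f := fun j => a j * a j)
          (fun j _ => mul_self_nonneg _) (Finset.mem_univ i)
      calc ‖a‖ ^ 2 ≤ Real.sqrt (∑ i, a i * a i) ^ 2 := by
            exact pow_le_pow_left₀ (norm_nonneg a) h1 2
        _ = ∑ i, a i * a i := Real.sq_sqrt (Finset.sum_nonneg fun i _ => mul_self_nonneg _)
    -- dual a ≥ ‖a‖^2 / nrm a ≥ ‖a‖^2/(Cn ‖a‖) = ‖a‖/Cn
    have h2 : (S.nrm a)⁻¹ * ‖a‖ ^ 2 ≤ S.dual a :=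
      le_trans (mul_le_mul_of_nonneg_left hsq (inv_nonneg.mpr hna.le)) hsum
    have hnorm_pos : 0 < ‖a‖ := norm_pos_iff.mpr ha
    have h3 : S.nrm a ≤ Cn * ‖a‖ := hCn a
    have h4 : (Cn * ‖a‖)⁻¹ * ‖a‖ ^ 2 ≤ (S.nrm a)⁻¹ * ‖a‖ ^ 2 := by
      refine mul_le_mul_of_nonneg_right ?_ (sq_nonneg _)
      exact inv_anti₀ hna h3
    have h5 : (Cn * ‖a‖)⁻¹ * ‖a‖ ^ 2 = ‖a‖ / Cn := by
      field_simp
    rw [h5] at h4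
    have h6 : ‖a‖ / Cn ≤ S.dual a := le_trans h4 h2
    rw [div_le_iff₀ hCn0] at h6
    calc ‖a‖ ≤ S.dual a * Cn := h6
      _ = Cn * S.dual a := mul_comm _ _

theorem eq_zero_of_dual_eq_zero {a : Vec N} (h : S.dual a = 0) : a = 0 := by
  obtain ⟨C, hC0, hC⟩ := S.norm_le_dual
  have := hC a
  rw [h, mul_zero] at this
  exact norm_le_zero_iff.mp this

end Setting
theorem conv_smul {N : ℕ} (U : Matrix (Fin N) (Fin N) ℝ) (t : ℝ) (b x : Vec N) :
    conv U (t • b) x = t • conv U b x := by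
  unfold conv
  rw [Matrix.mulVec_smul, smul_mul_assoc, Matrix.mulVec_smul]

theorem conv_zero {N : ℕ} (U : Matrix (Fin N) (Fin N) ℝ) (x : Vec N) :
    conv U (0 : Vec N) x = 0 := by
  unfold conv
  rw [Matrix.mulVec_zero, zero_mul, Matrix.mulVec_zero]

theorem relu_smul {N : ℕ} {t : ℝ} (ht : 0 ≤ t) (v : Vec N) :
    relu (t • v) = t • relu v := by
  funext i
  simp only [relu, Pi.smul_apply, smul_eq_mul]
  rw [mul_max_of_nonneg _ _ ht, mul_zero]

theorem relu_zero {N : ℕ} : relu (0 : Vec N) = 0 := by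
  funext i
  simp [relu]

namespace Setting

variable {N : ℕ} (S : Setting N)

theorem neuron_def' (x : Vec N) (p : Param N) :
    S.neuron x p = ∑ i, p.1 i * relu (conv S.U p.2.1 x + p.2.2) i := rfl

theorem neuron_smul (x : Vec N) (a b c : Vec N) {α β : ℝ} (hβ : 0 ≤ β) :
    S.neuron x (α • a, β • b, β • c) = (α * β) * S.neuron x (a, b, c) := by
  simp only [neuron_def']
  have h1 : conv S.U (β • b) x + β • c = β • (conv S.U b x + c) := by
    rw [conv_smul, smul_add]
  rw [Finset.mul_sum]
  refine Finset.sum_congr rfl fun i _ => ?_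
  simp only [h1, relu_smul hβ, Pi.smul_apply, smul_eq_mul]
  ring

theorem neuron_zero_of_a_zero (x : Vec N) (b c : Vec N) :
    S.neuron x (0, b, c) = 0 := by
  simp [neuron_def']

theorem neuron_zero_of_weight_zero (x : Vec N) {p : Param N} (hb : p.2.1 ∈ S.W)
    (hw : S.weight p = 0) : S.neuron x p = 0 := by
  obtain ⟨a, b, c⟩ := p
  simp only [weight] at hw
  rcases mul_eq_zero.mp hw with h | h
  · have : a = 0 := S.eq_zero_of_dual_eq_zero h
    rw [this]
    exact S.neuron_zero_of_a_zero x b c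
  · have hc0 : 0 ≤ S.conorm b := S.conorm_nonneg hb
    have hn0 : 0 ≤ S.nrm c := S.nrm_nonneg c
    have hcb : S.conorm b = 0 := by linarith
    have hnc : S.nrm c = 0 := by linarith
    have hb0 : b = 0 := (S.conorm_eq_zero b hb).mp hcb
    have hc0' : c = 0 := (S.nrm_eq_zero c).mp hnc
    subst hb0 hc0'
    simp [neuron_def', conv_zero, relu_zero]

theorem neuron_continuous (x : Vec N) : Continuous fun p : Param N => S.neuron x p := by
  simp only [neuron_def']
  refine continuous_finset_sum _ fun i _ => ?_
  refine Continuous.mul ?_ ?_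
  · exact (continuous_apply i).comp continuous_fst
  · refine Continuous.max ?_ continuous_const
    refine Continuous.add ?_ ?_
    · -- p ↦ conv U p.2.1 x i
      have : (fun p : Param N => conv S.U p.2.1 x i) =
          fun p : Param N => ∑ j, S.U i j *
            ((∑ l, S.U.transpose j l * p.2.1 l) * (∑ l, S.U.transpose j l * x l)) := by
        funext p
        simp [conv, Matrix.mulVec, dotProduct]
      rw [this]
      refine continuous_finset_sum _ fun j _ => ?_
      refine continuous_const.mul (Continuous.mul ?_ continuous_const)
      refine continuous_finset_sum _ fun l _ => ?_
      exact continuous_const.mul (((continuous_apply l).comp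
        (continuous_fst.comp continuous_snd)))
    · exact (continuous_apply i).comp (continuous_snd.comp continuous_snd)

theorem weight_nonneg {p : Param N} (hb : p.2.1 ∈ S.W) : 0 ≤ S.weight p :=
  mul_nonneg (S.dual_nonneg _) (add_nonneg (S.conorm_nonneg hb) (S.nrm_nonneg _))

theorem avg_weight_le {M : ℕ} (hM : 1 ≤ M) (θ : Fin M → Param N)
    (hbW : ∀ m, (θ m).2.1 ∈ S.W) {Q : ℝ} (hQ : 0 < Q) {p : ℝ≥0∞} (hp : 1 ≤ p)
    (h : S.pathNorm p θ ≤ Q) :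
    (M : ℝ)⁻¹ * ∑ m, S.weight (θ m) ≤ Q := by
  have hM0 : (0:ℝ) < M := by exact_mod_cast hM
  have wnn : ∀ m, 0 ≤ S.weight (θ m) := fun m => S.weight_nonneg (hbW m)
  by_cases hptop : p = ⊤
  · rw [pathNorm, if_pos hptop] at h
    have hle : ∀ m, S.weight (θ m) ≤ Q := by
      intro m
      refine le_trans (le_ciSup (f := fun m => S.weight (θ m))
        (Set.Finite.bddAbove (Set.finite_range _)) m) h
    calc (M : ℝ)⁻¹ * ∑ m, S.weight (θ m) ≤ (M : ℝ)⁻¹ * ∑ _m : Fin M, Q := by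
          refine mul_le_mul_of_nonneg_left (Finset.sum_le_sum fun m _ => hle m)
            (by positivity)
      _ = Q := by
          rw [Finset.sum_const, Finset.card_univ, Fintype.card_fin, nsmul_eq_mul]
          field_simp
  · rw [pathNorm, if_neg hptop] at h
    set q := p.toReal with hq
    have hq1 : 1 ≤ q := by
      have := ENNReal.toReal_mono hptop hp
      simpa using this
    have hq0 : 0 < q := by linarith
    have hA : (0:ℝ) ≤ (M : ℝ)⁻¹ * ∑ m, S.weight (θ m) ^ q :=
      mul_nonneg (by positivity) (Finset.sum_nonneg fun m _ => Real.rpow_nonneg (wnn m) q)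
    have hAQ : (M : ℝ)⁻¹ * ∑ m, S.weight (θ m) ^ q ≤ Q ^ q := by
      have := Real.rpow_le_rpow (Real.rpow_nonneg hA q⁻¹) h hq0.le
      rwa [Real.rpow_inv_rpow hA hq0.ne'] at this
    -- Jensen
    have hjen : ((M : ℝ)⁻¹ * ∑ m, S.weight (θ m)) ^ q ≤
        (M : ℝ)⁻¹ * ∑ m, S.weight (θ m) ^ q := by
      have := Real.rpow_arith_mean_le_arith_mean_rpow Finset.univ
        (fun _ : Fin M => (M:ℝ)⁻¹) (fun m => S.weight (θ m))
        (fun _ _ => by positivity)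
        (by rw [Finset.sum_const, Finset.card_univ, Fintype.card_fin, nsmul_eq_mul]; field_simp)
        (fun m _ => wnn m) hq1
      calc ((M : ℝ)⁻¹ * ∑ m, S.weight (θ m)) ^ q
          = (∑ m, (M:ℝ)⁻¹ * S.weight (θ m)) ^ q := by rw [Finset.mul_sum]
        _ ≤ ∑ m, (M:ℝ)⁻¹ * S.weight (θ m) ^ q := this
        _ = (M : ℝ)⁻¹ * ∑ m, S.weight (θ m) ^ q := by rw [Finset.mul_sum]
    have hfin : ((M : ℝ)⁻¹ * ∑ m, S.weight (θ m)) ^ q ≤ Q ^ q := le_trans hjen hAQ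
    by_contra hc
    push_neg at hc
    exact absurd hfin (not_le.mpr (Real.rpow_lt_rpow hQ.le hc hq0))

end Setting
section Cantor

open Filter

/-- Cantor space -/
abbrev Cnt : Type := ℕ → Bool

noncomputable def binF (z : Cnt) : ℝ := ∑' i : ℕ, (if z i then ((1:ℝ)/2) ^ (i+1) else 0)

theorem summable_half : Summable (fun i : ℕ => ((1:ℝ)/2) ^ (i+1)) := by
  have : (fun i : ℕ => ((1:ℝ)/2) ^ (i+1)) = fun i : ℕ => ((1:ℝ)/2) ^ i * (1/2) := by
    funext i; rw [pow_succ]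
  rw [this]
  exact summable_geometric_two.mul_right _

theorem tsum_half : ∑' i : ℕ, ((1:ℝ)/2) ^ (i+1) = 1 := by
  have : (fun i : ℕ => ((1:ℝ)/2) ^ (i+1)) = fun i : ℕ => ((1:ℝ)/2) ^ i * (1/2) := by
    funext i; rw [pow_succ]
  rw [this, tsum_mul_right, tsum_geometric_two]
  norm_num

theorem binF_summable (z : Cnt) :
    Summable (fun i : ℕ => (if z i then ((1:ℝ)/2) ^ (i+1) else 0)) := by
  refine Summable.of_nonneg_of_le (fun i => by positivity) (fun i => ?_) summable_half
  split
  · exact le_rfl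
  · positivity

theorem binF_continuous : Continuous binF := by
  refine continuous_tsum (fun i => ?_) summable_half (fun i z => ?_)
  · exact Continuous.comp (continuous_of_discreteTopology
      (f := fun b : Bool => if b then ((1:ℝ)/2) ^ (i+1) else 0)) (continuous_apply i)
  · rw [Real.norm_eq_abs]
    split
    · rw [abs_of_nonneg (by positivity)]
    · simp

theorem binF_nonneg (z : Cnt) : 0 ≤ binF z :=
  tsum_nonneg fun i => by positivity

theorem binF_le_one (z : Cnt) : binF z ≤ 1 := by
  rw [← tsum_half]
  refine Summable.tsum_le_tsum (fun i => ?_) (binF_summable z) summable_half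
  split
  · exact le_rfl
  · positivity

/-- greedy partial sums for the binary expansion of `t` -/
noncomputable def grB (t : ℝ) : ℕ → ℝ
  | 0 => 0
  | i + 1 => grB t i + (if grB t i + ((1:ℝ)/2) ^ (i+1) ≤ t then ((1:ℝ)/2) ^ (i+1) else 0)

open Classical in
noncomputable def binZ (t : ℝ) : Cnt := fun i =>
  if grB t i + ((1:ℝ)/2) ^ (i+1) ≤ t then true else false

theorem grB_invariant {t : ℝ} (h0 : 0 ≤ t) (h1 : t ≤ 1) (i : ℕ) :
    grB t i ≤ t ∧ t ≤ grB t i + ((1:ℝ)/2) ^ i := by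
  induction i with
  | zero => refine ⟨by simpa [grB] using h0, by simp [grB]; linarith⟩
  | succ i ih =>
    rw [grB]
    by_cases h : grB t i + ((1:ℝ)/2) ^ (i+1) ≤ t
    · rw [if_pos h]
      constructor
      · linarith
      · have : ((1:ℝ)/2) ^ i = ((1:ℝ)/2)^(i+1) + ((1:ℝ)/2)^(i+1) := by
          rw [pow_succ]; ring
        linarith [ih.2]
    · rw [if_neg h]
      push_neg at h
      refine ⟨by linarith [ih.1], by linarith⟩

theorem grB_sum (t : ℝ) (k : ℕ) :
    grB t k = ∑ i ∈ Finset.range k, (if binZ t i then ((1:ℝ)/2) ^ (i+1) else 0) := by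
  induction k with
  | zero => simp [grB]
  | succ k ih =>
    rw [Finset.sum_range_succ, ← ih, grB, binZ]
    by_cases h : grB t k + ((1:ℝ)/2) ^ (k+1) ≤ t <;> simp [h]

theorem binF_binZ {t : ℝ} (h0 : 0 ≤ t) (h1 : t ≤ 1) : binF (binZ t) = t := by
  have hs := binF_summable (binZ t)
  have hten : Tendsto (fun k => ∑ i ∈ Finset.range k,
      (if binZ t i then ((1:ℝ)/2) ^ (i+1) else 0)) atTop (nhds (binF (binZ t))) :=
    hs.hasSum.tendsto_sum_nat
  have hten2 : Tendsto (fun k => grB t k) atTop (nhds t) := by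
    have hgeo : Tendsto (fun k : ℕ => ((1:ℝ)/2) ^ k) atTop (nhds 0) := by
      refine tendsto_pow_atTop_nhds_zero_of_lt_one (by norm_num) (by norm_num)
    refine tendsto_of_tendsto_of_tendsto_of_le_of_le (g := fun k => t - ((1:ℝ)/2)^k)
      (h := fun _ => t) ?_ tendsto_const_nhds
      (fun k => by linarith [(grB_invariant h0 h1 k).2])
      (fun k => (grB_invariant h0 h1 k).1)
    have h2 := Tendsto.sub (tendsto_const_nhds (x := t) (f := atTop)) hgeo
    simpa using h2
  have : (fun k => ∑ i ∈ Finset.range k, (if binZ t i then ((1:ℝ)/2) ^ (i+1) else 0))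
      = fun k => grB t k := by
    funext k; rw [grB_sum]
  rw [this] at hten
  exact tendsto_nhds_unique hten hten2

theorem binF_surj {t : ℝ} (h0 : 0 ≤ t) (h1 : t ≤ 1) : ∃ z : Cnt, binF z = t :=
  ⟨binZ t, binF_binZ h0 h1⟩

/-- cube map: a continuous surjection from Cantor space onto `[0,1]^ι`. -/
noncomputable def cubeF {ι : Type*} (e : ι × ℕ ≃ ℕ) (z : Cnt) : ι → ℝ :=
  fun i => binF (fun j => z (e (i, j)))

theorem cubeF_continuous {ι : Type*} (e : ι × ℕ ≃ ℕ) : Continuous (cubeF e) := by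
  refine continuous_pi fun i => ?_
  exact binF_continuous.comp (continuous_pi fun j => continuous_apply _)

theorem cubeF_mem {ι : Type*} (e : ι × ℕ ≃ ℕ) (z : Cnt) (i : ι) :
    cubeF e z i ∈ Set.Icc (0:ℝ) 1 := ⟨binF_nonneg _, binF_le_one _⟩

theorem cubeF_surj {ι : Type*} (e : ι × ℕ ≃ ℕ) (y : ι → ℝ)
    (hy : ∀ i, y i ∈ Set.Icc (0:ℝ) 1) : ∃ z : Cnt, cubeF e z = y := by
  choose zi hzi using fun i => binF_surj (hy i).1 (hy i).2
  refine ⟨fun n => zi (e.symm n).1 (e.symm n).2, ?_⟩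
  funext i
  have : (fun j => zi (e.symm (e (i, j))).1 (e.symm (e (i, j))).2) = zi i := by
    funext j; rw [Equiv.symm_apply_apply]
  rw [cubeF, this, hzi]

/-- uniform continuity modulus: continuous functions on Cantor space depend on
finitely many coordinates up to `ε`. -/
theorem cantor_modulus {F : Cnt → ℝ} (hF : Continuous F) {ε : ℝ} (hε : 0 < ε) :
    ∃ k : ℕ, ∀ z z' : Cnt, (∀ i, i < k → z i = z' i) → |F z - F z'| ≤ ε := by
  have hUC : UniformContinuous F := CompactSpace.uniformContinuous_of_continuous hF
  have hV : {p : ℝ × ℝ | dist p.1 p.2 < ε} ∈ uniformity ℝ := Metric.dist_mem_uniformity hε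
  have hU : (fun p : Cnt × Cnt => (F p.1, F p.2)) ⁻¹'
      {p : ℝ × ℝ | dist p.1 p.2 < ε} ∈ uniformity Cnt := hUC hV
  rw [Pi.uniformity] at hU
  rw [Filter.mem_iInf] at hU
  obtain ⟨I, hIfin, V, hV, hUeq⟩ := hU
  have hbdd : ∃ k : ℕ, ∀ i ∈ I, i < k := by
    obtain ⟨k, hk⟩ := hIfin.bddAbove
    exact ⟨k + 1, fun i hi => Nat.lt_succ_of_le (hk hi)⟩
  obtain ⟨k, hk⟩ := hbdd
  refine ⟨k, fun z z' hzz => ?_⟩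
  have hmem : (z, z') ∈ ⋂ i : I, V i := by
    refine Set.mem_iInter.mpr fun i => ?_
    obtain ⟨Wi, hWi, hWsub⟩ := Filter.mem_comap.mp (hV i)
    refine hWsub ?_
    have heq : uniformity Bool = Filter.principal SetRel.id := rfl
    rw [heq, Filter.mem_principal] at hWi
    exact Set.mem_preimage.mpr (hWi (SetRel.mem_id.mpr (hzz i (hk i i.2))))
  rw [← hUeq] at hmem
  have : dist (F z) (F z') < ε := hmem
  rw [Real.dist_eq] at this
  exact this.le

end Cantor
section Tmap

open MeasureTheory

/-- reversed prefix of length `k` of a Cantor point -/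
def prC (z : Cnt) : ℕ → List Bool
  | 0 => []
  | k + 1 => z k :: prC z k

theorem prC_length (z : Cnt) (k : ℕ) : (prC z k).length = k := by
  induction k with
  | zero => rfl
  | succ k ih => simp [prC, ih]

theorem prC_agree {z z' : Cnt} {k : ℕ} :
    prC z k = prC z' k ↔ ∀ i, i < k → z i = z' i := by
  induction k with
  | zero => simp [prC]
  | succ k ih =>
    simp only [prC, List.cons.injEq, ih]
    constructor
    · rintro ⟨h1, h2⟩ i hi
      rcases Nat.lt_succ_iff_lt_or_eq.mp hi with h | h
      · exact h2 i h
      · subst h; exact h1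
    · intro h
      exact ⟨h k (Nat.lt_succ_self k), fun i hi => h i (Nat.lt_succ_of_lt hi)⟩

/-- a canonical Cantor point with given reversed prefix -/
def extC (s : List Bool) : Cnt := fun i => s.getD (s.length - 1 - i) false

theorem prC_extC (s : List Bool) : prC (extC s) s.length = s := by
  induction s with
  | nil => rfl
  | cons b s ih =>
    show prC (extC (b :: s)) (s.length + 1) = b :: s
    rw [prC]
    congr 1
    · show (b :: s).getD ((b :: s).length - 1 - s.length) false = b
      simp
    · rw [show prC (extC (b :: s)) s.length = prC (extC s) s.length from
        prC_agree.mpr fun i hi => ?_, ih]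
      show (b :: s).getD ((b :: s).length - 1 - i) false = s.getD (s.length - 1 - i) false
      have h1 : (b :: s).length - 1 - i = (s.length - 1 - i) + 1 := by
        simp only [List.length_cons]
        omega
      rw [h1, List.getD_cons_succ]

variable (μ : List Bool → ℝ)

/-- left endpoint of the subinterval corresponding to a reversed prefix -/
def LamC : List Bool → ℝ
  | [] => 0
  | b :: s => LamC s + (if b then μ (false :: s) else 0)

/-- the interval-splitting state recursion: given `t ∈ [0,1)`, tracks the reversed
prefix and left endpoint of the cylinder containing `t`. -/
noncomputable def grT (t : ℝ) : ℕ → List Bool × ℝ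
  | 0 => ([], 0)
  | k + 1 =>
    let p := grT t k
    have := Classical.propDecidable (t < p.2 + μ (false :: p.1))
    if t < p.2 + μ (false :: p.1) then (false :: p.1, p.2)
    else (true :: p.1, p.2 + μ (false :: p.1))

/-- the interval-splitting map `[0,1) → Cantor space` associated to cylinder masses `μ` -/
noncomputable def TCm (t : ℝ) : Cnt := fun k => ((grT μ t (k + 1)).1).headD false

theorem grT_fst_cons (t : ℝ) (k : ℕ) :
    (grT μ t (k + 1)).1 = TCm μ t k :: (grT μ t k).1 := by
  show (grT μ t (k + 1)).1 = ((grT μ t (k + 1)).1).headD false :: (grT μ t k).1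
  rw [grT]
  split <;> rfl

theorem grT_fst_prC (t : ℝ) (k : ℕ) : (grT μ t k).1 = prC (TCm μ t) k := by
  induction k with
  | zero => rfl
  | succ k ih => rw [grT_fst_cons, prC, ih]

theorem grT_fst_length (t : ℝ) (k : ℕ) : (grT μ t k).1.length = k := by
  rw [grT_fst_prC, prC_length]

theorem grT_snd (t : ℝ) (k : ℕ) : (grT μ t k).2 = LamC μ ((grT μ t k).1) := by
  induction k with
  | zero => rfl
  | succ k ih =>
    rw [grT]
    split
    · simpa [LamC] using ih
    · simp only [LamC, if_true]
      rw [ih]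

theorem TCm_false_iff (t : ℝ) (k : ℕ) :
    TCm μ t k = false ↔ t < (grT μ t k).2 + μ (false :: (grT μ t k).1) := by
  unfold TCm
  rw [grT]
  split
  · simpa
  · simpa using not_lt.mpr (le_of_not_gt (by assumption))

variable {μ}
variable (hnn : ∀ s, 0 ≤ μ s) (hadd : ∀ s, μ s = μ (false :: s) + μ (true :: s))
  (hnil : μ [] = 1)

include hnn hadd hnil in
theorem LamC_bounds : ∀ s : List Bool, 0 ≤ LamC μ s ∧ LamC μ s + μ s ≤ 1 := by
  intro s
  induction s with
  | nil => simp [LamC, hnil]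
  | cons b s ih =>
    rcases ih with ⟨h0, h1⟩
    have h2 := hadd s
    have h3 := hnn (false :: s)
    have h4 := hnn (true :: s)
    cases b <;> constructor <;> simp [LamC] <;> linarith

include hnn hadd hnil in
theorem grT_interval : ∀ (s : List Bool), ∀ t : ℝ, t ∈ Set.Ico (0:ℝ) 1 →
    ((grT μ t s.length).1 = s ↔ t ∈ Set.Ico (LamC μ s) (LamC μ s + μ s)) := by
  intro s
  induction s with
  | nil =>
    intro t ht
    simpa [grT, LamC, hnil] using ht
  | cons b s ih =>
    intro t ht
    have hcons := grT_fst_cons μ t s.length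
    have hsnd := grT_snd μ t s.length
    show (grT μ t (s.length + 1)).1 = b :: s ↔ _
    rw [hcons, List.cons.injEq]
    by_cases hs : (grT μ t s.length).1 = s
    · have htI : t ∈ Set.Ico (LamC μ s) (LamC μ s + μ s) := (ih t ht).mp hs
      have hL : (grT μ t s.length).2 = LamC μ s := by rw [hsnd, hs]
      have hbit : TCm μ t s.length = false ↔ t < LamC μ s + μ (false :: s) := by
        rw [TCm_false_iff, hL, hs]
      have h2 := hadd s
      have h3 := hnn (false :: s)
      have h4 := hnn (true :: s)
      cases b
      · simp only [hs, and_true, hbit, LamC, if_neg (Bool.false_ne_true)]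
        constructor
        · intro h; exact ⟨by simpa using htI.1, by simpa using h⟩
        · intro h; simpa using h.2
      · simp only [hs, and_true, LamC, if_true]
        constructor
        · intro h
          have : ¬ (TCm μ t s.length = false) := by simp [h]
          rw [hbit] at this
          push_neg at this
          refine ⟨this, ?_⟩
          have := htI.2
          linarith
        · intro h
          have : ¬ (t < LamC μ s + μ (false :: s)) := not_lt.mpr h.1
          rw [← hbit] at this
          simpa using (Bool.not_eq_false _).mp this
    · constructor
      · rintro ⟨-, h⟩; exact absurd h hs
      · intro h
        exfalso
        refine hs ((ih t ht).mpr ?_)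
        have h2 := hadd s
        have h3 := hnn (false :: s)
        have h4 := hnn (true :: s)
        cases b
        · simp only [LamC, if_neg (Bool.false_ne_true)] at h
          exact ⟨by simpa using h.1, by rcases h with ⟨ha, hb⟩; simp at hb ⊢; linarith⟩
        · simp only [LamC, if_true] at h
          exact ⟨by rcases h with ⟨ha, hb⟩; linarith, by rcases h with ⟨ha, hb⟩; linarith⟩

theorem grT_meas : ∀ s : List Bool, MeasurableSet {t : ℝ | (grT μ t s.length).1 = s} := by
  intro s
  induction s with
  | nil =>
    have : {t : ℝ | (grT μ t ([] : List Bool).length).1 = []} = Set.univ := by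
      ext t; simp [grT]
    rw [this]; exact MeasurableSet.univ
  | cons b s ih =>
    have hset : {t : ℝ | (grT μ t (b :: s).length).1 = b :: s} =
        {t : ℝ | (grT μ t s.length).1 = s} ∩
          (if b = false then {t : ℝ | t < LamC μ s + μ (false :: s)}
           else {t : ℝ | ¬ t < LamC μ s + μ (false :: s)}) := by
      ext t
      show (grT μ t (s.length + 1)).1 = b :: s ↔ _
      rw [grT_fst_cons, List.cons.injEq]
      constructor
      · rintro ⟨h1, h2⟩
        refine ⟨h2, ?_⟩
        have hL : (grT μ t s.length).2 = LamC μ s := by rw [grT_snd, h2]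
        have hbit := (TCm_false_iff μ t s.length)
        rw [hL, h2] at hbit
        cases b
        · rw [if_pos rfl]; exact hbit.mp h1
        · rw [if_neg (by simp)]
          intro hc
          have := hbit.mpr hc
          rw [h1] at this
          exact absurd this (by simp)
      · rintro ⟨h2, h1⟩
        refine ⟨?_, h2⟩
        have hL : (grT μ t s.length).2 = LamC μ s := by rw [grT_snd, h2]
        have hbit := (TCm_false_iff μ t s.length)
        rw [hL, h2] at hbit
        cases b
        · rw [if_pos rfl] at h1; exact hbit.mpr h1
        · rw [if_neg (by simp)] at h1
          rcases Bool.eq_false_or_eq_true (TCm μ t s.length) with hc | hc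
          · exact hc
          · exact absurd (hbit.mp hc) h1
    rw [hset]
    refine ih.inter ?_
    split
    · exact measurableSet_Iio
    · exact (measurableSet_Iio (a := LamC μ s + μ (false :: s))).compl

theorem TCm_measurable : Measurable (TCm μ) := by
  refine measurable_pi_lambda _ fun k => ?_
  refine measurable_to_countable' fun b => ?_
  have : (fun t => TCm μ t k) ⁻¹' {b} =
      ⋃ s ∈ {s : List Bool | s.length = k}, {t : ℝ | (grT μ t (k+1)).1 = b :: s} := by
    ext t
    simp only [Set.mem_preimage, Set.mem_singleton_iff, Set.mem_iUnion, Set.mem_setOf_eq]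
    constructor
    · intro h
      refine ⟨(grT μ t k).1, grT_fst_length μ t k, ?_⟩
      rw [grT_fst_cons, h]
    · rintro ⟨s, hs, h⟩
      rw [grT_fst_cons, List.cons.injEq] at h
      exact h.1
  rw [this]
  refine MeasurableSet.biUnion (Set.to_countable _) fun s hs => ?_
  have hs' : s.length = k := hs
  have hlen : (b :: s).length = k + 1 := by simp [hs']
  have := grT_meas (μ := μ) (b :: s)
  rwa [hlen] at this

include hnn hadd hnil in
theorem grT_vol (s : List Bool) :
    volume ({t : ℝ | (grT μ t s.length).1 = s} ∩ Set.Ico (0:ℝ) 1) =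
      ENNReal.ofReal (μ s) := by
  have hb := LamC_bounds hnn hadd hnil s
  have hsub : Set.Ico (LamC μ s) (LamC μ s + μ s) ⊆ Set.Ico (0:ℝ) 1 := by
    intro t ht
    exact ⟨le_trans hb.1 ht.1, lt_of_lt_of_le ht.2 hb.2⟩
  have hset : {t : ℝ | (grT μ t s.length).1 = s} ∩ Set.Ico (0:ℝ) 1 =
      Set.Ico (LamC μ s) (LamC μ s + μ s) := by
    ext t
    constructor
    · rintro ⟨h1, h2⟩
      exact (grT_interval hnn hadd hnil s t h2).mp h1
    · intro ht
      have ht01 := hsub ht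
      exact ⟨(grT_interval hnn hadd hnil s t ht01).mpr ht, ht01⟩
  rw [hset, Real.volume_Ico]
  congr 1
  ring

/-- the finite set of reversed prefixes of length `k` -/
def cylFinset (k : ℕ) : Finset (List Bool) :=
  Finset.image (fun σ : Fin k → Bool => List.ofFn σ) Finset.univ

theorem mem_cylFinset {k : ℕ} {s : List Bool} : s ∈ cylFinset k ↔ s.length = k := by
  simp only [cylFinset, Finset.mem_image, Finset.mem_univ, true_and]
  constructor
  · rintro ⟨σ, rfl⟩; exact List.length_ofFn
  · intro h
    exact ⟨fun i => s.get (Fin.cast h.symm i), by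
      subst h
      exact List.ofFn_get s⟩

include hnn hadd hnil in
theorem step_integral (G : List Bool → ℝ) (k : ℕ) :
    ∫ t in Set.Ico (0:ℝ) 1, G ((grT μ t k).1) =
      ∑ s ∈ cylFinset k, G s * μ s := by
  have hmeasIco : MeasurableSet (Set.Ico (0:ℝ) 1) := measurableSet_Ico
  have hgmeas : ∀ s : List Bool, s.length = k → MeasurableSet {t : ℝ | (grT μ t k).1 = s} := by
    intro s hs
    have := grT_meas (μ := μ) s
    rwa [hs] at this
  have hrw : ∀ t ∈ Set.Ico (0:ℝ) 1, G ((grT μ t k).1) =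
      ∑ s ∈ cylFinset k, Set.indicator {t' : ℝ | (grT μ t' k).1 = s} (fun _ => G s) t := by
    intro t _
    rw [Finset.sum_eq_single ((grT μ t k).1)]
    · rw [Set.indicator_of_mem (by exact rfl)]
    · intro s hs hne
      refine Set.indicator_of_notMem (fun hc => hne ?_) _
      rw [← hc]
    · intro hc
      exact absurd (mem_cylFinset.mpr (grT_fst_length μ t k)) hc
  rw [setIntegral_congr_fun hmeasIco hrw]
  rw [integral_finset_sum]
  · refine Finset.sum_congr rfl fun s hs => ?_
    rw [setIntegral_indicator (hgmeas s (mem_cylFinset.mp hs))]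
    rw [setIntegral_const, Set.inter_comm]
    have hvol : volume ({t : ℝ | (grT μ t k).1 = s} ∩ Set.Ico (0:ℝ) 1) =
        ENNReal.ofReal (μ s) := by
      have := grT_vol hnn hadd hnil s
      rwa [mem_cylFinset.mp hs] at this
    rw [measureReal_def, hvol, ENNReal.toReal_ofReal (hnn s), smul_eq_mul, mul_comm]
  · intro s hs
    rw [integrable_indicator_iff (hgmeas s (mem_cylFinset.mp hs))]
    refine (integrableOn_const_iff (C := G s)).mpr (Or.inr ?_)
    refine lt_of_le_of_lt (measure_mono (Set.subset_univ _)) ?_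
    rw [Measure.restrict_apply_univ, Real.volume_Ico]
    exact ENNReal.ofReal_lt_top

end Tmap
section Gamma

open MeasureTheory

variable {N : ℕ}

/-- a linear projection of `ℝ^N` onto the subspace `W` -/
noncomputable def prWmap (S : Setting N) : Vec N →ₗ[ℝ] Vec N :=
  S.W.subtype.comp (S.W.linearProjOfIsCompl
    (Classical.choose (Submodule.exists_isCompl S.W))
    (Classical.choose_spec (Submodule.exists_isCompl S.W)))

theorem prWmap_mem (S : Setting N) (y : Vec N) : prWmap S y ∈ S.W := by
  simp only [prWmap, LinearMap.comp_apply]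
  exact (S.W.linearProjOfIsCompl _ _ y).2

theorem prWmap_of_mem (S : Setting N) {b : Vec N} (hb : b ∈ S.W) : prWmap S b = b := by
  simp only [prWmap, LinearMap.comp_apply]
  have := Submodule.linearProjOfIsCompl_apply_left
    (Classical.choose_spec (Submodule.exists_isCompl S.W)) ⟨b, hb⟩
  exact (congrArg S.W.subtype this).trans rfl

theorem prWmap_continuous (S : Setting N) : Continuous (prWmap S) :=
  LinearMap.continuous_of_finiteDimensional _

/-- parametrization of a weight-capped set of parameters -/
noncomputable def Phi (S : Setting N) (Q : ℝ) (y : Vec N × Vec N × Vec N) : Param N :=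
  ((Q / max 1 (S.dual y.1 * (S.conorm (prWmap S y.2.1) + S.nrm y.2.2))) • y.1,
    prWmap S y.2.1, y.2.2)

theorem Phi_mem_W (S : Setting N) (Q : ℝ) (y : Vec N × Vec N × Vec N) :
    (Phi S Q y).2.1 ∈ S.W := prWmap_mem S _

theorem Phi_weight_le (S : Setting N) {Q : ℝ} (hQ : 0 < Q) (y : Vec N × Vec N × Vec N) :
    S.weight (Phi S Q y) ≤ Q := by
  set q := S.dual y.1 * (S.conorm (prWmap S y.2.1) + S.nrm y.2.2) with hq
  have hq0 : 0 ≤ q :=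
    mul_nonneg (S.dual_nonneg _) (add_nonneg (S.conorm_nonneg (prWmap_mem S _)) (S.nrm_nonneg _))
  have hmax : (0:ℝ) < max 1 q := lt_of_lt_of_le one_pos (le_max_left _ _)
  have hdiv : 0 ≤ Q / max 1 q := div_nonneg hQ.le hmax.le
  have h1 : S.weight (Phi S Q y) ≤ (Q / max 1 q) * q := by
    show S.dual ((Q / max 1 q) • y.1) * (S.conorm (prWmap S y.2.1) + S.nrm y.2.2) ≤ _
    have h2 := S.dual_smul_le hdiv y.1
    calc S.dual ((Q / max 1 q) • y.1) * (S.conorm (prWmap S y.2.1) + S.nrm y.2.2)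
        ≤ ((Q / max 1 q) * S.dual y.1) * (S.conorm (prWmap S y.2.1) + S.nrm y.2.2) := by
          refine mul_le_mul_of_nonneg_right h2 ?_
          exact add_nonneg (S.conorm_nonneg (prWmap_mem S _)) (S.nrm_nonneg _)
      _ = (Q / max 1 q) * q := by rw [hq]; ring
  refine le_trans h1 ?_
  calc (Q / max 1 q) * q ≤ (Q / max 1 q) * max 1 q :=
        mul_le_mul_of_nonneg_left (le_max_right _ _) hdiv
    _ = Q := div_mul_cancel₀ Q hmax.ne'

theorem Phi_continuous (S : Setting N) (Q : ℝ) : Continuous (Phi S Q) := by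
  have hpr : Continuous fun y : Vec N × Vec N × Vec N => prWmap S y.2.1 :=
    (prWmap_continuous S).comp (continuous_fst.comp continuous_snd)
  have hco : Continuous fun y : Vec N × Vec N × Vec N => S.conorm (prWmap S y.2.1) := by
    have : Continuous fun y : Vec N × Vec N × Vec N =>
        (⟨prWmap S y.2.1, prWmap_mem S _⟩ : ↥S.W) := Continuous.subtype_mk hpr _
    exact S.conormW_continuous.comp this
  have hnr : Continuous fun y : Vec N × Vec N × Vec N => S.nrm y.2.2 :=
    S.nrm_continuous.comp (continuous_snd.comp continuous_snd)
  have hdu : Continuous fun y : Vec N × Vec N × Vec N => S.dual y.1 :=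
    S.dual_continuous.comp continuous_fst
  have hqc : Continuous fun y : Vec N × Vec N × Vec N =>
      S.dual y.1 * (S.conorm (prWmap S y.2.1) + S.nrm y.2.2) := hdu.mul (hco.add hnr)
  have hmaxne : ∀ y : Vec N × Vec N × Vec N,
      max 1 (S.dual y.1 * (S.conorm (prWmap S y.2.1) + S.nrm y.2.2)) ≠ 0 :=
    fun y => (lt_of_lt_of_le one_pos (le_max_left _ _)).ne'
  refine Continuous.prodMk ?_ (Continuous.prodMk hpr (continuous_snd.comp continuous_snd))
  exact ((continuous_const.div (continuous_const.max hqc) hmaxne)).smul continuous_fst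

/-- the continuous map from Cantor space onto the normalized parameter set -/
noncomputable def gammaMap (S : Setting N) (Q R : ℝ) (e : (Fin 3 × Fin N) × ℕ ≃ ℕ)
    (z : Cnt) : Param N :=
  Phi S Q (fun i => (2 * cubeF e z ((0 : Fin 3), i) - 1) * R,
           fun i => (2 * cubeF e z ((1 : Fin 3), i) - 1) * R,
           fun i => (2 * cubeF e z ((2 : Fin 3), i) - 1) * R)

theorem gammaMap_continuous (S : Setting N) (Q R : ℝ) (e : (Fin 3 × Fin N) × ℕ ≃ ℕ) :
    Continuous (gammaMap S Q R e) := by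
  refine (Phi_continuous S Q).comp ?_
  have hcc : ∀ (j : Fin 3), Continuous fun z : Cnt => fun i : Fin N =>
      (2 * cubeF e z (j, i) - 1) * R := by
    intro j
    refine continuous_pi fun i => ?_
    have h1 : Continuous fun z : Cnt => cubeF e z (j, i) :=
      (continuous_apply (j, i)).comp (cubeF_continuous e)
    continuity
  exact Continuous.prodMk (hcc 0) (Continuous.prodMk (hcc 1) (hcc 2))

theorem gammaMap_surj (S : Setting N) (Q : ℝ) {R : ℝ} (hR : 0 < R)
    (e : (Fin 3 × Fin N) × ℕ ≃ ℕ) (y : Vec N × Vec N × Vec N)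
    (h1 : ∀ i, |y.1 i| ≤ R) (h2 : ∀ i, |y.2.1 i| ≤ R) (h3 : ∀ i, |y.2.2 i| ≤ R) :
    ∃ z : Cnt, gammaMap S Q R e z = Phi S Q y := by
  set tg : Fin 3 × Fin N → ℝ := fun ji =>
    ((if ji.1 = 0 then y.1 ji.2 else if ji.1 = 1 then y.2.1 ji.2 else y.2.2 ji.2) + R) / (2 * R)
    with htg
  have htgIcc : ∀ ji, tg ji ∈ Set.Icc (0:ℝ) 1 := by
    intro ji
    have hval : |(if ji.1 = 0 then y.1 ji.2 else if ji.1 = 1 then y.2.1 ji.2 else y.2.2 ji.2)| ≤ R := by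
      split
      · exact h1 ji.2
      · split
        · exact h2 ji.2
        · exact h3 ji.2
    rw [abs_le] at hval
    constructor
    · rw [htg]
      refine div_nonneg (by linarith [hval.1]) (by linarith)
    · rw [htg, div_le_one (by linarith)]
      linarith [hval.2]
  obtain ⟨z, hz⟩ := cubeF_surj e tg htgIcc
  refine ⟨z, ?_⟩
  have hcoord : ∀ (j : Fin 3) (i : Fin N), (2 * cubeF e z (j, i) - 1) * R =
      (if j = 0 then y.1 i else if j = 1 then y.2.1 i else y.2.2 i) := by
    intro j i
    rw [hz, htg]
    set w := (if j = 0 then y.1 i else if j = 1 then y.2.1 i else y.2.2 i) with hw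
    show (2 * ((w + R) / (2 * R)) - 1) * R = w
    field_simp
    ring
  have hy : ((fun i => (2 * cubeF e z ((0 : Fin 3), i) - 1) * R),
      (fun i => (2 * cubeF e z ((1 : Fin 3), i) - 1) * R),
      (fun i => (2 * cubeF e z ((2 : Fin 3), i) - 1) * R)) = y := by
    obtain ⟨y1, y2, y3⟩ := y
    refine Prod.ext ?_ (Prod.ext ?_ ?_) <;> funext i
    · simpa using hcoord 0 i
    · have := hcoord 1 i
      norm_num at this ⊢
      exact this
    · have := hcoord 2 i
      norm_num at this ⊢
      exact this
  unfold gammaMap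
  rw [hy]

end Gamma
section Hit

open MeasureTheory

variable {N : ℕ}

theorem ind_split (z : Cnt) (s : List Bool) :
    (if prC z s.length = s then (1:ℝ) else 0) =
    (if prC z (false :: s).length = false :: s then (1:ℝ) else 0) +
    (if prC z (true :: s).length = true :: s then (1:ℝ) else 0) := by
  have h1 : (false :: s).length = s.length + 1 := rfl
  have h2 : (true :: s).length = s.length + 1 := rfl
  rw [h1, h2]
  show _ = (if z s.length :: prC z s.length = false :: s then (1:ℝ) else 0) +
    (if z s.length :: prC z s.length = true :: s then (1:ℝ) else 0)
  by_cases h : prC z s.length = s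
  · cases hz : z s.length <;> simp [List.cons.injEq, h, hz]
  · simp [List.cons.injEq, h]

theorem zero_exists (S : Setting N) {Q : ℝ} (hQ : 0 < Q) {R : ℝ} (hR0 : 0 < R)
    (e : (Fin 3 × Fin N) × ℕ ≃ ℕ) :
    ∃ z : Cnt, ∀ x : Vec N, S.neuron x (gammaMap S Q R e z) = 0 := by
  obtain ⟨z, hz⟩ := gammaMap_surj S Q hR0 e (0, 0, 0)
    (fun i => by simp [hR0.le]) (fun i => by simp [hR0.le]) (fun i => by simp [hR0.le])
  refine ⟨z, fun x => ?_⟩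
  rw [hz]
  have ha : (Phi S Q ((0 : Vec N), (0 : Vec N), (0 : Vec N))).1 = 0 := by
    show (_ : ℝ) • (0 : Vec N) = 0
    exact smul_zero _
  have : Phi S Q ((0 : Vec N), (0 : Vec N), (0 : Vec N)) =
      (0, prWmap S 0, (0 : Vec N)) := by
    unfold Phi
    rw [show ((Q / max 1 (S.dual (0:Vec N) * (S.conorm (prWmap S 0) + S.nrm 0))) •
      (0 : Vec N)) = 0 from smul_zero _]
  rw [this, map_zero]
  exact S.neuron_zero_of_a_zero x 0 0

theorem hit_exists (S : Setting N) {Q : ℝ} (hQ : 0 < Q) {R : ℝ} (hR0 : 0 < R)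
    (e : (Fin 3 × Fin N) × ℕ ≃ ℕ)
    {Cd : ℝ} (hCd : ∀ a, ‖a‖ ≤ Cd * S.dual a) (hRCd : Cd ≤ R)
    {cw : ℝ} (hcw0 : 0 < cw) (hcw : ∀ b ∈ S.W, cw * ‖b‖ ≤ S.conorm b) (hRcw : 1/cw ≤ R)
    {cn : ℝ} (hcn0 : 0 < cn) (hcn : ∀ c, cn * ‖c‖ ≤ S.nrm c) (hRcn : 1/cn ≤ R)
    (p : Param N) (hbW : p.2.1 ∈ S.W) (Wt : ℝ) (hWt0 : 0 ≤ Wt) (hWtQ : Wt ≤ Q)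
    (hwpos : 0 < S.weight p) :
    ∃ z : Cnt, ∀ x : Vec N,
      S.weight p * S.neuron x (gammaMap S Q R e z) = Wt * S.neuron x p := by
  obtain ⟨a, b, c⟩ := p
  simp only at hbW
  have hwdef : S.weight (a, b, c) = S.dual a * (S.conorm b + S.nrm c) := rfl
  rw [hwdef] at hwpos
  have hr0 : 0 ≤ S.dual a := S.dual_nonneg a
  have hs0 : 0 ≤ S.conorm b + S.nrm c := add_nonneg (S.conorm_nonneg hbW) (S.nrm_nonneg c)
  have hr : 0 < S.dual a := by
    rcases lt_or_eq_of_le hr0 with h | h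
    · exact h
    · rw [← h] at hwpos; simp at hwpos
  have hs : 0 < S.conorm b + S.nrm c := by
    rcases lt_or_eq_of_le hs0 with h | h
    · exact h
    · rw [← h] at hwpos; simp at hwpos
  set r := S.dual a with hrdef
  set s := S.conorm b + S.nrm c with hsdef
  set y : Vec N × Vec N × Vec N := ((Wt / (Q * r)) • a, (1/s) • b, (1/s) • c) with hy
  -- coordinate bounds
  have hb1 : ∀ i, |y.1 i| ≤ R := by
    intro i
    have : |y.1 i| = (Wt / (Q * r)) * |a i| := by
      show |(Wt / (Q * r)) • a i| = _
      rw [smul_eq_mul, abs_mul, abs_of_nonneg (by positivity)]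
    rw [this]
    have hai : |a i| ≤ Cd * r := le_trans (norm_le_pi_norm a i) (hCd a)
    calc (Wt / (Q * r)) * |a i| ≤ (Wt / (Q * r)) * (Cd * r) := by
          refine mul_le_mul_of_nonneg_left hai (by positivity)
      _ = (Wt / Q) * Cd := by field_simp
      _ ≤ 1 * Cd := by
          refine mul_le_mul_of_nonneg_right ?_ ?_
          · rw [div_le_one hQ]; exact hWtQ
          · nlinarith [abs_nonneg (a i), norm_le_pi_norm a i, hCd a]
      _ = Cd := one_mul Cd
      _ ≤ R := hRCd
  have hb2 : ∀ i, |y.2.1 i| ≤ R := by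
    intro i
    have heq : |y.2.1 i| = (1/s) * |b i| := by
      show |(1/s) • b i| = _
      rw [smul_eq_mul, abs_mul, abs_of_nonneg (by positivity)]
    rw [heq]
    have hbi : |b i| ≤ s / cw := by
      refine le_trans (norm_le_pi_norm b i) ?_
      rw [le_div_iff₀ hcw0, mul_comm]
      exact le_trans (hcw b hbW) (by rw [hsdef]; linarith [S.nrm_nonneg c])
    calc (1/s) * |b i| ≤ (1/s) * (s / cw) := by
          refine mul_le_mul_of_nonneg_left hbi (by positivity)
      _ = 1 / cw := by field_simp
      _ ≤ R := hRcw
  have hb3 : ∀ i, |y.2.2 i| ≤ R := by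
    intro i
    have heq : |y.2.2 i| = (1/s) * |c i| := by
      show |(1/s) • c i| = _
      rw [smul_eq_mul, abs_mul, abs_of_nonneg (by positivity)]
    rw [heq]
    have hci : |c i| ≤ s / cn := by
      refine le_trans (norm_le_pi_norm c i) ?_
      rw [le_div_iff₀ hcn0, mul_comm]
      exact le_trans (hcn c) (by rw [hsdef]; linarith [S.conorm_nonneg hbW])
    calc (1/s) * |c i| ≤ (1/s) * (s / cn) := by
          refine mul_le_mul_of_nonneg_left hci (by positivity)
      _ = 1 / cn := by field_simp
      _ ≤ R := hRcn
  obtain ⟨z, hz⟩ := gammaMap_surj S Q hR0 e y hb1 hb2 hb3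
  -- compute Phi S Q y
  have hbmem : (1/s) • b ∈ S.W := S.W.smul_mem _ hbW
  have hpr : prWmap S y.2.1 = (1/s) • b := prWmap_of_mem S hbmem
  have hnorm1 : S.conorm (prWmap S y.2.1) + S.nrm y.2.2 = 1 := by
    rw [hpr]
    show S.conorm ((1/s) • b) + S.nrm ((1/s) • c) = 1
    rw [S.conorm_smul _ _ hbW, S.nrm_smul, abs_of_nonneg (by positivity : (0:ℝ) ≤ 1/s)]
    rw [hsdef]
    field_simp
    exact div_self hs.ne'
  have hq_le : S.dual y.1 * (S.conorm (prWmap S y.2.1) + S.nrm y.2.2) ≤ 1 := by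
    rw [hnorm1, mul_one]
    have := S.dual_smul_le (by positivity : (0:ℝ) ≤ Wt / (Q * r)) a
    refine le_trans this ?_
    rw [← hrdef]
    calc Wt / (Q * r) * r = Wt / Q := by field_simp
      _ ≤ 1 := by rw [div_le_one hQ]; exact hWtQ
  have hmax : max 1 (S.dual y.1 * (S.conorm (prWmap S y.2.1) + S.nrm y.2.2)) = 1 :=
    max_eq_left hq_le
  have hPhi : Phi S Q y = ((Wt / r) • a, (1/s) • b, (1/s) • c) := by
    unfold Phi
    rw [hmax, hpr]
    congr 1
    show (Q / 1) • ((Wt / (Q * r)) • a) = (Wt / r) • a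
    rw [div_one, smul_smul]
    congr 1
    field_simp
  refine ⟨z, fun x => ?_⟩
  rw [hz, hPhi]
  have := S.neuron_smul x a b c (α := Wt / r) (β := 1/s) (by positivity)
  rw [this, hwdef]
  field_simp

end Hit
set_option maxHeartbeats 1000000 in
open MeasureTheory in
/-- inverse approximation theorem: a pointwise limit on `Ω` of GCNN outputs
with `p`-path norm at most `Q` lies in the Barron space with `‖f‖_B ≤ Q`. -/
theorem inverse_approximation {N : ℕ} (S : Setting N) (Q : ℝ) (hQ : 0 < Q)
    (p : ℝ≥0∞) (hp : 1 ≤ p) (f : ℕ → Vec N → ℝ) (hfn : ∀ n, f n ∈ S.CQp Q p)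
    (g : Vec N → ℝ)
    (hconv : ∀ x ∈ S.dom, Filter.Tendsto (fun n => f n x) Filter.atTop (nhds (g x))) :
    S.memB g ∧ S.barron g ≤ ENNReal.ofReal Q := by
  classical
  -- Step 1: an opaque continuous parametrization γ of a weight-capped parameter set
  have hpack : ∃ γ : Cnt → Param N, Continuous γ ∧ (∀ z, (γ z).2.1 ∈ S.W) ∧
      (∀ z, S.weight (γ z) ≤ Q) ∧ (∃ z₀, ∀ x : Vec N, S.neuron x (γ z₀) = 0) ∧
      (∀ q : Param N, q.2.1 ∈ S.W → ∀ Wt : ℝ, 0 ≤ Wt → Wt ≤ Q → 0 < S.weight q →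
        ∃ z, ∀ x : Vec N, S.weight q * S.neuron x (γ z) = Wt * S.neuron x q) := by
    haveI : Nonempty (Fin N) := ⟨⟨0, S.hN⟩⟩
    letI : Denumerable ((Fin 3 × Fin N) × ℕ) := Denumerable.ofEncodableOfInfinite _
    have e : (Fin 3 × Fin N) × ℕ ≃ ℕ := Denumerable.eqv ((Fin 3 × Fin N) × ℕ)
    obtain ⟨cn, hcn0, hcn⟩ := S.nrm_lower
    obtain ⟨cw, hcw0, hcw⟩ := S.conorm_lower
    obtain ⟨Cd, hCd0, hCd⟩ := S.norm_le_dual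
    set R : ℝ := max (max Cd (1/cw)) (1/cn) + 1 with hRdef
    have hRCd : Cd ≤ R := by
      have h1 := le_max_left Cd (1/cw)
      have h2 := le_max_left (max Cd (1/cw)) (1/cn)
      rw [hRdef]; linarith
    have hRcw : 1/cw ≤ R := by
      have h1 := le_max_right Cd (1/cw)
      have h2 := le_max_left (max Cd (1/cw)) (1/cn)
      rw [hRdef]; linarith
    have hRcn : 1/cn ≤ R := by
      have h1 := le_max_right (max Cd (1/cw)) (1/cn)
      rw [hRdef]; linarith
    have hR0 : 0 < R := lt_of_lt_of_le hCd0 hRCd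
    exact ⟨gammaMap S Q R e, gammaMap_continuous S Q R e,
      fun z => Phi_mem_W S Q _, fun z => Phi_weight_le S hQ _,
      zero_exists S hQ hR0 e,
      fun q hq Wt h0 h1 h2 =>
        hit_exists S hQ hR0 e hCd hRCd hcw0 hcw hRcw hcn0 hcn hRcn q hq Wt h0 h1 h2⟩
  obtain ⟨γ, hγcont, hγW, hγwt, ⟨z₀, hz₀⟩, hγhit⟩ := hpack
  -- Step 2: network data and discrete representations over γ
  choose M hM θ hθW hθPN hθEq using hfn
  have hdisc : ∀ n : ℕ, ∃ (lam : Fin (M n) → ℝ) (zz : Fin (M n) → Cnt),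
      (∀ m, 0 ≤ lam m) ∧ (∑ m, lam m = 1) ∧
      (∀ x ∈ S.dom, f n x = ∑ m, lam m * S.neuron x (γ (zz m))) := by
    intro n
    have hMpos : (0:ℝ) < M n := by exact_mod_cast hM n
    set w : Fin (M n) → ℝ := fun m => S.weight (θ n m) with hwdef
    have hw0 : ∀ m, 0 ≤ w m := fun m => S.weight_nonneg (hθW n m)
    set Wt : ℝ := (M n : ℝ)⁻¹ * ∑ m, w m with hWtdef
    have hWt0 : 0 ≤ Wt :=
      mul_nonneg (by positivity) (Finset.sum_nonneg fun m _ => hw0 m)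
    have hWtQ : Wt ≤ Q := S.avg_weight_le (hM n) (θ n) (hθW n) hQ hp (hθPN n)
    have hMW : (M n : ℝ) * Wt = ∑ m, w m := by
      rw [hWtdef, ← mul_assoc, mul_inv_cancel₀ hMpos.ne', one_mul]
    have hzzex : ∀ m : Fin (M n), ∃ z : Cnt,
        (0 < w m → ∀ x, w m * S.neuron x (γ z) = Wt * S.neuron x (θ n m)) ∧
        (¬ 0 < w m → ∀ x, S.neuron x (γ z) = 0) := by
      intro m
      by_cases h : 0 < w m
      · obtain ⟨z, hz⟩ := hγhit (θ n m) (hθW n m) Wt hWt0 hWtQ h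
        exact ⟨z, fun _ x => hz x, fun hc => absurd h hc⟩
      · exact ⟨z₀, fun hc => absurd hc h, fun _ x => hz₀ x⟩
    choose zz hzz1 hzz2 using hzzex
    refine ⟨fun m => if Wt = 0 then (M n : ℝ)⁻¹ else w m / ((M n) * Wt), zz, ?_, ?_, ?_⟩
    · intro m
      split
      · positivity
      · next h =>
        have h1 := hWt0.lt_of_ne' h
        exact div_nonneg (hw0 m) (mul_nonneg hMpos.le h1.le)
    · by_cases h : Wt = 0
      · simp only [if_pos h]
        rw [Finset.sum_const, Finset.card_univ, Fintype.card_fin, nsmul_eq_mul]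
        exact mul_inv_cancel₀ hMpos.ne'
      · simp only [if_neg h]
        rw [← Finset.sum_div, ← hMW]
        exact div_self (mul_ne_zero hMpos.ne' h)
    · intro x hx
      rw [hθEq n x hx]
      show (M n : ℝ)⁻¹ * ∑ m, S.neuron x (θ n m) = _
      rw [Finset.mul_sum]
      refine Finset.sum_congr rfl fun m _ => ?_
      by_cases hWn : Wt = 0
      · have hsw : ∑ m', w m' = 0 := by rw [← hMW, hWn, mul_zero]
        have hwm : w m = 0 :=
          (Finset.sum_eq_zero_iff_of_nonneg (fun m' _ => hw0 m')).mp hsw m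
            (Finset.mem_univ m)
        have hn1 : S.neuron x (θ n m) = 0 :=
          S.neuron_zero_of_weight_zero x (hθW n m) hwm
        have hn2 : S.neuron x (γ (zz m)) = 0 := hzz2 m (by rw [hwm]; exact lt_irrefl 0) x
        rw [hn1, hn2, mul_zero, mul_zero]
      · have hWpos : 0 < Wt := hWt0.lt_of_ne' hWn
        by_cases hwm : 0 < w m
        · have hkey := hzz1 m hwm x
          have hγval : S.neuron x (γ (zz m)) = Wt * S.neuron x (θ n m) / w m := by
            rw [eq_div_iff hwm.ne']
            linarith [hkey]
          rw [hγval]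
          simp only [if_neg hWn]
          field_simp
        · have hwm0 : w m = 0 := le_antisymm (not_lt.mp hwm) (hw0 m)
          have hn1 : S.neuron x (θ n m) = 0 :=
            S.neuron_zero_of_weight_zero x (hθW n m) hwm0
          have hn2 : S.neuron x (γ (zz m)) = 0 := hzz2 m hwm x
          rw [hn1, hn2, mul_zero, mul_zero]
  choose lam zz hlam0 hlamsum hrep using hdisc
  -- Step 3: cylinder masses
  have hvex : ∀ n : ℕ, ∃ vn : List Bool → ℝ,
      (∀ s, vn s ∈ Set.Icc (0:ℝ) 1) ∧
      (∀ s, vn s = vn (false :: s) + vn (true :: s)) ∧ (vn [] = 1) ∧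
      (∀ (k : ℕ) (G : List Bool → ℝ), ∑ s ∈ cylFinset k, G s * vn s =
        ∑ m, lam n m * G (prC (zz n m) k)) := by
    intro n
    refine ⟨fun s => ∑ m, lam n m * (if prC (zz n m) s.length = s then (1:ℝ) else 0),
      ?_, ?_, ?_, ?_⟩
    · intro s
      constructor
      · refine Finset.sum_nonneg fun m _ => mul_nonneg (hlam0 n m) ?_
        split <;> norm_num
      · calc ∑ m, lam n m * (if prC (zz n m) s.length = s then (1:ℝ) else 0)
            ≤ ∑ m, lam n m := by
              refine Finset.sum_le_sum fun m _ => ?_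
              have h1 : (if prC (zz n m) s.length = s then (1:ℝ) else 0) ≤ 1 := by
                split <;> norm_num
              calc lam n m * (if prC (zz n m) s.length = s then (1:ℝ) else 0)
                  ≤ lam n m * 1 := mul_le_mul_of_nonneg_left h1 (hlam0 n m)
                _ = lam n m := mul_one _
          _ = 1 := hlamsum n
    · intro s
      rw [← Finset.sum_add_distrib]
      refine Finset.sum_congr rfl fun m _ => ?_
      rw [← mul_add, ind_split (zz n m) s]
    · have : ∀ m : Fin (M n), prC (zz n m) 0 = [] := fun m => rfl
      calc ∑ m, lam n m * (if prC (zz n m) (List.length []) = [] then (1:ℝ) else 0)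
          = ∑ m, lam n m := Finset.sum_congr rfl fun m _ => by
            rw [List.length_nil, if_pos (this m), mul_one]
        _ = 1 := hlamsum n
    · intro k G
      calc ∑ s ∈ cylFinset k, G s * ∑ m, lam n m *
            (if prC (zz n m) s.length = s then (1:ℝ) else 0)
          = ∑ s ∈ cylFinset k, ∑ m, G s * (lam n m *
            (if prC (zz n m) s.length = s then (1:ℝ) else 0)) := by
            refine Finset.sum_congr rfl fun s _ => Finset.mul_sum _ _ _
        _ = ∑ m, ∑ s ∈ cylFinset k, G s * (lam n m *
            (if prC (zz n m) s.length = s then (1:ℝ) else 0)) := Finset.sum_comm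
        _ = ∑ m, lam n m * G (prC (zz n m) k) := by
            refine Finset.sum_congr rfl fun m _ => ?_
            rw [Finset.sum_eq_single (prC (zz n m) k)]
            · rw [prC_length, if_pos rfl, mul_one]
              ring
            · intro s hs hne
              have hlen : s.length = k := mem_cylFinset.mp hs
              rw [hlen, if_neg (fun hc => hne hc.symm), mul_zero, mul_zero]
            · intro hc
              exact absurd (mem_cylFinset.mpr (prC_length (zz n m) k)) hc
  choose v hv01 hvadd hvnil hvswap using hvex
  -- Step 4: subsequence extraction
  have hK : IsCompact (Set.pi Set.univ (fun _ : List Bool => Set.Icc (0:ℝ) 1)) :=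
    isCompact_univ_pi fun _ => isCompact_Icc
  have hvK : ∀ n, v n ∈ Set.pi Set.univ (fun _ : List Bool => Set.Icc (0:ℝ) 1) :=
    fun n => fun s _ => hv01 n s
  obtain ⟨μ, hμK, φ, hφmono, hφtend⟩ := hK.tendsto_subseq hvK
  have hμpt : ∀ s, Filter.Tendsto (fun i => v (φ i) s) Filter.atTop (nhds (μ s)) := by
    rw [tendsto_pi_nhds] at hφtend
    exact fun s => hφtend s
  have hμnn : ∀ s, 0 ≤ μ s := fun s => (hμK s (Set.mem_univ s)).1
  have hμadd : ∀ s, μ s = μ (false :: s) + μ (true :: s) := by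
    intro s
    refine tendsto_nhds_unique (hμpt s) ?_
    have h1 := (hμpt (false :: s)).add (hμpt (true :: s))
    have h2 : (fun i => v (φ i) (false :: s) + v (φ i) (true :: s)) =
        fun i => v (φ i) s := by
      funext i
      exact (hvadd (φ i) s).symm
    rwa [h2] at h1
  have hμnil : μ [] = 1 := by
    refine tendsto_nhds_unique (hμpt []) ?_
    have h2 : (fun i => v (φ i) ([] : List Bool)) = fun _ => (1:ℝ) := by
      funext i; exact hvnil (φ i)
    rw [h2]
    exact tendsto_const_nhds
  -- Step 5: the limit measure
  have hTmeas : Measurable (TCm μ) := TCm_measurable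
  have hΛmeas : Measurable (fun t => γ (TCm μ t)) := hγcont.measurable.comp hTmeas
  haveI hProb : IsProbabilityMeasure (volume.restrict (Set.Ico (0:ℝ) 1)) := by
    constructor
    rw [Measure.restrict_apply_univ, Real.volume_Ico]
    norm_num
  set ρ : Measure (Param N) :=
    Measure.map (fun t => γ (TCm μ t)) (volume.restrict (Set.Ico (0:ℝ) 1)) with hρdef
  haveI hρProb : IsProbabilityMeasure ρ := Measure.isProbabilityMeasure_map hΛmeas.aemeasurable
  -- Step 6: the key limit identity
  have hkey : ∀ x ∈ S.dom,
      g x = ∫ t in Set.Ico (0:ℝ) 1, S.neuron x (γ (TCm μ t)) := by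
    intro x hx
    set F : Cnt → ℝ := fun z => S.neuron x (γ z) with hFdef
    have hF : Continuous F := (S.neuron_continuous x).comp hγcont
    obtain ⟨B, hB⟩ : ∃ B : ℝ, ∀ z, |F z| ≤ B := by
      obtain ⟨B, hB⟩ := (isCompact_range (hF.abs)).bddAbove
      exact ⟨B, fun z => hB ⟨z, rfl⟩⟩
    have hFTmeas : Measurable fun t => F (TCm μ t) := hF.measurable.comp hTmeas
    have hFTint : Integrable (fun t => F (TCm μ t)) (volume.restrict (Set.Ico (0:ℝ) 1)) := by
      refine Integrable.mono' (integrable_const B) hFTmeas.aestronglyMeasurable ?_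
      exact Filter.Eventually.of_forall fun t => by rw [Real.norm_eq_abs]; exact hB _
    have hclaim : Filter.Tendsto (fun i => f (φ i) x) Filter.atTop
        (nhds (∫ t in Set.Ico (0:ℝ) 1, F (TCm μ t))) := by
      rw [Metric.tendsto_atTop]
      intro ε hε
      obtain ⟨k, hmod⟩ := cantor_modulus hF (show (0:ℝ) < ε/4 by linarith)
      set G : List Bool → ℝ := fun s => F (extC s) with hGdef
      have hagree : ∀ (z : Cnt), |F z - G (prC z k)| ≤ ε/4 := by
        intro z
        refine hmod z (extC (prC z k)) fun i hi => ?_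
        have hlen : (prC z k).length = k := prC_length z k
        have h1 : prC (extC (prC z k)) k = prC z k := by
          have := prC_extC (prC z k)
          rwa [hlen] at this
        exact (prC_agree.mp h1.symm) i hi
      have hGB : ∀ s, |G s| ≤ B := fun s => hB _
      -- Est1
      have hEst1 : ∀ n, |f n x - ∑ s ∈ cylFinset k, G s * v n s| ≤ ε/4 := by
        intro n
        rw [hvswap n k G, hrep n x hx, ← Finset.sum_sub_distrib]
        calc |∑ m, (lam n m * S.neuron x (γ (zz n m)) - lam n m * G (prC (zz n m) k))|
            ≤ ∑ m, |lam n m * S.neuron x (γ (zz n m)) - lam n m * G (prC (zz n m) k)| :=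
              Finset.abs_sum_le_sum_abs _ _
          _ ≤ ∑ m, lam n m * (ε/4) := by
              refine Finset.sum_le_sum fun m _ => ?_
              have h1 : lam n m * S.neuron x (γ (zz n m)) - lam n m * G (prC (zz n m) k) =
                  lam n m * (F (zz n m) - G (prC (zz n m) k)) := by
                simp only [hFdef]
                ring
              rw [h1, abs_mul, abs_of_nonneg (hlam0 n m)]
              exact mul_le_mul_of_nonneg_left (hagree (zz n m)) (hlam0 n m)
          _ = ε/4 := by rw [← Finset.sum_mul, hlamsum n, one_mul]
      -- Est2
      have hGsteq : (fun t => G ((grT μ t k).1)) = fun t =>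
          ∑ s ∈ cylFinset k, Set.indicator {t' : ℝ | (grT μ t' k).1 = s}
            (fun _ => G s) t := by
        funext t
        rw [Finset.sum_eq_single ((grT μ t k).1)]
        · rw [Set.indicator_of_mem (by exact rfl)]
        · intro s hs hne
          exact Set.indicator_of_notMem (fun hc => hne (by rw [← hc])) _
        · intro hc
          exact absurd (mem_cylFinset.mpr (grT_fst_length μ t k)) hc
      have hGstmeas : Measurable fun t => G ((grT μ t k).1) := by
        rw [hGsteq]
        refine Finset.measurable_sum _ fun s hs => ?_
        have hms : MeasurableSet {t' : ℝ | (grT μ t' k).1 = s} := by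
          have := grT_meas (μ := μ) s
          rwa [mem_cylFinset.mp hs] at this
        exact Measurable.indicator measurable_const hms
      have hGstint : Integrable (fun t => G ((grT μ t k).1))
          (volume.restrict (Set.Ico (0:ℝ) 1)) := by
        refine Integrable.mono' (integrable_const B) hGstmeas.aestronglyMeasurable ?_
        exact Filter.Eventually.of_forall fun t => by rw [Real.norm_eq_abs]; exact hGB _
      have hEst2 : |(∫ t in Set.Ico (0:ℝ) 1, F (TCm μ t)) -
          ∑ s ∈ cylFinset k, G s * μ s| ≤ ε/4 := by
        rw [← step_integral hμnn hμadd hμnil G k, ← integral_sub hFTint hGstint]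
        have hptw : ∀ t : ℝ, ‖F (TCm μ t) - G ((grT μ t k).1)‖ ≤ ε/4 := by
          intro t
          rw [Real.norm_eq_abs]
          have h2 : (grT μ t k).1 = prC (TCm μ t) k := grT_fst_prC μ t k
          rw [h2]
          exact hagree (TCm μ t)
        have h3 := norm_integral_le_of_norm_le_const
          (μ := volume.restrict (Set.Ico (0:ℝ) 1))
          (f := fun t => F (TCm μ t) - G ((grT μ t k).1)) (C := ε/4)
          (Filter.Eventually.of_forall hptw)
        rw [Real.norm_eq_abs] at h3
        refine le_trans h3 ?_
        rw [probReal_univ, mul_one]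
      -- Est3
      have hEst3 : Filter.Tendsto (fun i => ∑ s ∈ cylFinset k, G s * v (φ i) s) Filter.atTop
          (nhds (∑ s ∈ cylFinset k, G s * μ s)) := by
        refine tendsto_finset_sum _ fun s _ => ?_
        exact (hμpt s).const_mul (G s)
      rw [Metric.tendsto_atTop] at hEst3
      obtain ⟨K₀, hK₀⟩ := hEst3 (ε/4) (by linarith)
      refine ⟨K₀, fun i hi => ?_⟩
      have d1 := hEst1 (φ i)
      have d2 := hK₀ i hi
      rw [Real.dist_eq] at d2 ⊢
      have t1 := abs_sub_le (f (φ i) x) (∑ s ∈ cylFinset k, G s * v (φ i) s)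
        (∫ t in Set.Ico (0:ℝ) 1, F (TCm μ t))
      have t2 := abs_sub_le (∑ s ∈ cylFinset k, G s * v (φ i) s)
        (∑ s ∈ cylFinset k, G s * μ s) (∫ t in Set.Ico (0:ℝ) 1, F (TCm μ t))
      have d3 : |(∑ s ∈ cylFinset k, G s * μ s) -
          (∫ t in Set.Ico (0:ℝ) 1, F (TCm μ t))| ≤ ε/4 := by
        rw [abs_sub_comm]
        exact hEst2
      linarith
    have hsub : Filter.Tendsto (fun i => f (φ i) x) Filter.atTop (nhds (g x)) :=
      (hconv x hx).comp (hφmono.tendsto_atTop)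
    exact tendsto_nhds_unique hsub hclaim
  -- Step 7: reps membership
  have hWclosed : IsClosed (S.W : Set (Vec N)) := Submodule.closed_of_finiteDimensional S.W
  have hWmeas : MeasurableSet {q : Param N | q.2.1 ∉ S.W} := by
    have h1 : {q : Param N | q.2.1 ∉ S.W} =
        ((fun q : Param N => q.2.1) ⁻¹' (S.W : Set (Vec N)))ᶜ := rfl
    rw [h1]
    exact ((hWclosed.measurableSet).preimage
      (continuous_fst.comp continuous_snd).measurable).compl
  have hρmem : ρ ∈ S.reps g := by
    refine ⟨hρProb, ?_, ?_⟩
    · rw [hρdef, Measure.map_apply hΛmeas hWmeas]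
      have h1 : (fun t => γ (TCm μ t)) ⁻¹' {q : Param N | q.2.1 ∉ S.W} = ∅ := by
        ext t
        simp only [Set.mem_preimage, Set.mem_setOf_eq, Set.mem_empty_iff_false, iff_false,
          not_not]
        exact hγW (TCm μ t)
      rw [h1]
      exact measure_empty
    · intro x hx
      have hsm : AEStronglyMeasurable (S.neuron x) ρ :=
        (S.neuron_continuous x).aestronglyMeasurable
      have hF : Continuous fun z => S.neuron x (γ z) := (S.neuron_continuous x).comp hγcont
      obtain ⟨B, hB⟩ : ∃ B : ℝ, ∀ z, |S.neuron x (γ z)| ≤ B := by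
        obtain ⟨B, hB⟩ := (isCompact_range (hF.abs)).bddAbove
        exact ⟨B, fun z => hB ⟨z, rfl⟩⟩
      have hFTint : Integrable (fun t => S.neuron x (γ (TCm μ t)))
          (volume.restrict (Set.Ico (0:ℝ) 1)) := by
        refine Integrable.mono' (integrable_const B)
          (hF.measurable.comp hTmeas).aestronglyMeasurable ?_
        exact Filter.Eventually.of_forall fun t => by rw [Real.norm_eq_abs]; exact hB _
      constructor
      · rw [hρdef]
        exact (integrable_map_measure hsm hΛmeas.aemeasurable).mpr hFTint
      · rw [hρdef, integral_map hΛmeas.aemeasurable hsm]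
        exact hkey x hx
  -- Step 8: cost bound
  have hcost : S.cost ρ ≤ ENNReal.ofReal Q := by
    have hrangeclosed : IsClosed (Set.range γ) := (isCompact_range hγcont).isClosed
    have hae : ∀ᵐ q ∂ρ, q ∈ Set.range γ := by
      refine (MeasureTheory.ae_iff).mpr ?_
      have hcompl : {q : Param N | ¬ q ∈ Set.range γ} = (Set.range γ)ᶜ := rfl
      rw [hcompl, hρdef, Measure.map_apply hΛmeas hrangeclosed.measurableSet.compl]
      have h1 : (fun t => γ (TCm μ t)) ⁻¹' (Set.range γ)ᶜ = ∅ := by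
        ext t
        simp only [Set.mem_preimage, Set.mem_compl_iff, Set.mem_empty_iff_false, iff_false,
          not_not]
        exact ⟨TCm μ t, rfl⟩
      rw [h1]
      exact measure_empty
    calc S.cost ρ = ∫⁻ q, ENNReal.ofReal (S.weight q) ∂ρ := rfl
      _ ≤ ∫⁻ _, ENNReal.ofReal Q ∂ρ := by
          refine lintegral_mono_ae ?_
          refine hae.mono fun q hq => ?_
          obtain ⟨z, rfl⟩ := hq
          exact ENNReal.ofReal_le_ofReal (hγwt z)
      _ = ENNReal.ofReal Q := by
          rw [lintegral_const, measure_univ, mul_one]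
  have hbarron : S.barron g ≤ ENNReal.ofReal Q := by
    refine le_trans ?_ hcost
    exact iInf₂_le ρ hρmem
  exact ⟨⟨⟨ρ, hρmem⟩, lt_of_le_of_lt hbarron ENNReal.ofReal_lt_top⟩, hbarron⟩
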